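/- arXiv:1806.11029 — 2 statements merged into one kernel-verified Lean document; each statement's English description precedes it below -/
import Mathlib

section
/- Let μ be a signed measure on ℝ² with density f_μ satisfying |f_μ(x)| ≤ C_μ exp(−c_μ(|x₁| + |x₂|)) for some constants C_μ, c_μ > 0 and all x ∈ ℝ². Then there exists a constant C > 0 such that for all u ∈ (0,∞)², ∫_{ℝ²} μ(B(x,u))² dx ≤ C · min(u₁, u₁²) · min(u₂, u₂²). In particular, for any γ₁, γ₂ ∈ (1,2), μ belongs to 𝓜^{γ₁,γ₂} (Proposition 3.6 with α₁ = α₂ = 2). -/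
open MeasureTheory Filter Set Topology

/-- The axis-parallel rectangle (box) in `ℝ²` with centre `x` and edge lengths `u`. -/
def box (x u : ℝ × ℝ) : Set (ℝ × ℝ) :=
  Icc (x.1 - u.1 / 2) (x.1 + u.1 / 2) ×ˢ Icc (x.2 - u.2 / 2) (x.2 + u.2 / 2)

/-- The open positive quadrant `(0,∞)²`. -/
def posQuadrant : Set (ℝ × ℝ) := Ioi 0 ×ˢ Ioi 0

/-!
Write `E t = exp (-cμ |t|)`. The density is dominated by `Cμ E(y₁) E(y₂)`, so `|μ (box x u)|` is
dominated by `Cμ W_{u₁}(x₁) W_{u₂}(x₂)`, where `W_v(x) = ∫_{x - v/2}^{x + v/2} E` is a window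
integral, and by Fubini `∫ μ (box x u)² dx ≤ Cμ² (∫ W_{u₁}²) (∫ W_{u₂}²)`. Since `W_v` is the
convolution of `E` with the indicator of an interval of length `v`, `∫ W_v = v ∫ E`; together with
`W_v ≤ min v (∫ E)` this gives `∫ W_v² ≤ sup W_v · ∫ W_v ≲ min v (v²)`.
-/

open scoped Convolution

noncomputable def windowIntegral (g : ℝ → ℝ) (v x : ℝ) : ℝ :=
  ∫ t in Icc (x - v / 2) (x + v / 2), g t

section windowIntegral

variable {g : ℝ → ℝ} {v : ℝ}

theorem windowIntegral_eq_convolution (g : ℝ → ℝ) (v : ℝ) :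
    windowIntegral g v =
      g ⋆[ContinuousLinearMap.lsmul ℝ ℝ] (Icc (-(v / 2)) (v / 2)).indicator 1 := by
  ext x
  rw [windowIntegral, convolution_def, ← integral_indicator measurableSet_Icc]
  congr 1 with t
  have hmem : x - t ∈ Icc (-(v / 2)) (v / 2) ↔ t ∈ Icc (x - v / 2) (x + v / 2) := by
    simp only [mem_Icc]
    constructor <;> rintro ⟨h₁, h₂⟩ <;> constructor <;> linarith
  simp only [indicator_apply, hmem]
  split_ifs <;> simp

theorem integrable_windowIntegral (hg : Integrable g) : Integrable (windowIntegral g v) := by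
  rw [windowIntegral_eq_convolution]
  exact hg.integrable_convolution _
    ((integrableOn_const measure_Icc_lt_top.ne).integrable_indicator measurableSet_Icc)

theorem integral_windowIntegral (hg : Integrable g) (hv : 0 ≤ v) :
    ∫ x, windowIntegral g v x = (∫ t, g t) * v := by
  rw [windowIntegral_eq_convolution, integral_convolution _ hg
    ((integrableOn_const measure_Icc_lt_top.ne).integrable_indicator measurableSet_Icc),
    integral_indicator_one measurableSet_Icc, Real.volume_real_Icc_of_le (by linarith)]
  simp only [ContinuousLinearMap.lsmul_apply, smul_eq_mul]
  ring

theorem windowIntegral_nonneg (hg : 0 ≤ g) (v x : ℝ) : 0 ≤ windowIntegral g v x :=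
  setIntegral_nonneg measurableSet_Icc fun t _ => hg t

theorem windowIntegral_le_integral (hg : Integrable g) (hg₀ : 0 ≤ g) (v x : ℝ) :
    windowIntegral g v x ≤ ∫ t, g t :=
  setIntegral_le_integral hg (ae_of_all _ hg₀)

theorem windowIntegral_le_mul {M : ℝ} (hg : Integrable g) (hgM : ∀ t, g t ≤ M) (hv : 0 ≤ v)
    (x : ℝ) : windowIntegral g v x ≤ v * M := by
  calc windowIntegral g v x ≤ ∫ _ in Icc (x - v / 2) (x + v / 2), M :=
        setIntegral_mono_on hg.integrableOn (integrableOn_const measure_Icc_lt_top.ne)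
          measurableSet_Icc fun t _ => hgM t
    _ = v * M := by
        rw [setIntegral_const, Real.volume_real_Icc_of_le (by linarith), smul_eq_mul]
        ring

theorem integrable_sq_windowIntegral (hg : Integrable g) (hg₀ : 0 ≤ g) :
    Integrable fun x => windowIntegral g v x ^ 2 := by
  refine ((integrable_windowIntegral (v := v) hg).const_mul (∫ t, g t)).mono'
    ((integrable_windowIntegral hg).aestronglyMeasurable.pow 2) (ae_of_all _ fun x => ?_)
  rw [Real.norm_eq_abs, abs_of_nonneg (sq_nonneg _), sq]
  exact mul_le_mul_of_nonneg_right (windowIntegral_le_integral hg hg₀ v x)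
    (windowIntegral_nonneg hg₀ v x)

theorem integral_sq_windowIntegral_le {M : ℝ} (hg : Integrable g) (hg₀ : 0 ≤ g)
    (hgM : ∀ t, g t ≤ M) (hv : 0 < v) :
    ∫ x, windowIntegral g v x ^ 2 ≤ (∫ t, g t) * max M (∫ t, g t) * min v (v ^ 2) := by
  set I := ∫ t, g t
  have hI : 0 ≤ I := integral_nonneg hg₀
  have hsup : ∀ x, windowIntegral g v x ≤ min (v * M) I := fun x =>
    le_min (windowIntegral_le_mul hg hgM hv.le x) (windowIntegral_le_integral hg hg₀ v x)
  calc ∫ x, windowIntegral g v x ^ 2 ≤ ∫ x, min (v * M) I * windowIntegral g v x := by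
        refine integral_mono_of_nonneg (ae_of_all _ fun _ => sq_nonneg _)
          ((integrable_windowIntegral hg).const_mul _) (ae_of_all _ fun x => ?_)
        show windowIntegral g v x ^ 2 ≤ _
        rw [sq]
        exact mul_le_mul_of_nonneg_right (hsup x) (windowIntegral_nonneg hg₀ v x)
    _ = min (v * M) I * (I * v) := by rw [integral_const_mul, integral_windowIntegral hg hv.le]
    _ ≤ I * max M I * min v (v ^ 2) := by
        have hIv : 0 ≤ I * v := mul_nonneg hI hv.le
        rcases le_total v 1 with hv1 | hv1
        · rw [min_eq_right (show v ^ 2 ≤ v by nlinarith)]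
          calc min (v * M) I * (I * v) ≤ (v * max M I) * (I * v) := by
                gcongr
                exact (min_le_left _ _).trans (by gcongr; exact le_max_left _ _)
            _ = I * max M I * v ^ 2 := by ring
        · rw [min_eq_left (show v ≤ v ^ 2 by nlinarith)]
          calc min (v * M) I * (I * v) ≤ max M I * (I * v) := by
                gcongr
                exact (min_le_right _ _).trans (le_max_right _ _)
            _ = I * max M I * v := by ring

end windowIntegral

theorem integrable_exp_neg_mul_abs {c : ℝ} (hc : 0 < c) :
    Integrable fun t : ℝ => Real.exp (-c * |t|) := by
  have hneg : IntegrableOn (fun t : ℝ => Real.exp (-c * |t|)) (Iic 0) :=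
    (integrableOn_exp_mul_Iic hc 0).congr_fun (fun t ht => by
      rw [abs_of_nonpos ht, neg_mul_neg]) measurableSet_Iic
  have hpos : IntegrableOn (fun t : ℝ => Real.exp (-c * |t|)) (Ioi 0) :=
    (integrableOn_exp_mul_Ioi (neg_lt_zero.2 hc) 0).congr_fun (fun t ht => by
      rw [abs_of_pos ht]) measurableSet_Ioi
  simpa [Iic_union_Ioi] using hneg.union hpos

theorem integral_exp_neg_mul_abs {c : ℝ} (hc : 0 < c) :
    ∫ t : ℝ, Real.exp (-c * |t|) = 2 / c := by
  rw [integral_comp_abs (f := fun t => Real.exp (-c * t)),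
    integral_exp_mul_Ioi (neg_lt_zero.2 hc)]
  field_simp
  simp

theorem measurableSet_box (x u : ℝ × ℝ) : MeasurableSet (box x u) :=
  measurableSet_Icc.prod measurableSet_Icc

section boxDensity

variable {μ : SignedMeasure (ℝ × ℝ)} {f : ℝ × ℝ → ℝ} {C : ℝ} {g h : ℝ → ℝ}

theorem abs_apply_box_le (hμ : ∀ s, MeasurableSet s → μ s = ∫ y in s, f y)
    (hg : Integrable g) (hh : Integrable h) (hf : ∀ y, |f y| ≤ C * (g y.1 * h y.2))
    (x u : ℝ × ℝ) :
    |μ (box x u)| ≤ C * (windowIntegral g u.1 x.1 * windowIntegral h u.2 x.2) := by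
  have hdom : Integrable fun y : ℝ × ℝ => C * (g y.1 * h y.2) := by
    rw [Measure.volume_eq_prod]
    exact (hg.mul_prod hh).const_mul C
  rw [hμ _ (measurableSet_box x u)]
  calc |∫ y in box x u, f y| ≤ ∫ y in box x u, C * (g y.1 * h y.2) :=
        norm_integral_le_of_norm_le (f := f) hdom.integrableOn (ae_of_all _ hf)
    _ = C * (windowIntegral g u.1 x.1 * windowIntegral h u.2 x.2) := by
        rw [integral_const_mul, box, Measure.volume_eq_prod, setIntegral_prod_mul]
        rfl

theorem integral_sq_apply_box_le (hμ : ∀ s, MeasurableSet s → μ s = ∫ y in s, f y)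
    (hg : Integrable g) (hg₀ : 0 ≤ g) (hh : Integrable h) (hh₀ : 0 ≤ h)
    (hf : ∀ y, |f y| ≤ C * (g y.1 * h y.2)) (u : ℝ × ℝ) :
    ∫ x, μ (box x u) ^ 2 ≤
      C ^ 2 * ((∫ x, windowIntegral g u.1 x ^ 2) * ∫ x, windowIntegral h u.2 x ^ 2) := by
  have hdom : Integrable fun x : ℝ × ℝ =>
      C ^ 2 * (windowIntegral g u.1 x.1 ^ 2 * windowIntegral h u.2 x.2 ^ 2) := by
    rw [Measure.volume_eq_prod]
    exact ((integrable_sq_windowIntegral hg hg₀).mul_prod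
      (integrable_sq_windowIntegral hh hh₀)).const_mul _
  calc ∫ x, μ (box x u) ^ 2
      ≤ ∫ x : ℝ × ℝ, C ^ 2 * (windowIntegral g u.1 x.1 ^ 2 * windowIntegral h u.2 x.2 ^ 2) := by
        refine integral_mono_of_nonneg (ae_of_all _ fun _ => sq_nonneg _) hdom
          (ae_of_all _ fun x => ?_)
        calc μ (box x u) ^ 2 = |μ (box x u)| ^ 2 := (sq_abs _).symm
          _ ≤ (C * (windowIntegral g u.1 x.1 * windowIntegral h u.2 x.2)) ^ 2 :=
              pow_le_pow_left₀ (abs_nonneg _) (abs_apply_box_le hμ hg hh hf x u) 2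
          _ = _ := by ring
    _ = _ := by
        rw [integral_const_mul, Measure.volume_eq_prod, integral_prod_mul
          (fun x => windowIntegral g u.1 x ^ 2) (fun x => windowIntegral h u.2 x ^ 2)]

end boxDensity

theorem exp_decay_density_in_M_gamma_general
    (μ : MeasureTheory.SignedMeasure (ℝ × ℝ)) (fμ : ℝ × ℝ → ℝ)
    (hdens : ∀ s : Set (ℝ × ℝ), MeasurableSet s → μ s = ∫ y in s, fμ y)
    (Cμ cμ : ℝ) (hCμ : 0 < Cμ) (hcμ : 0 < cμ)
    (hdecay : ∀ x : ℝ × ℝ, |fμ x| ≤ Cμ * Real.exp (-cμ * (|x.1| + |x.2|))) :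
    ∃ C > (0 : ℝ), ∀ u ∈ posQuadrant,
      (∫ x : ℝ × ℝ, (μ (box x u)) ^ 2) ≤ C * min u.1 (u.1 ^ 2) * min u.2 (u.2 ^ 2) := by
  set E : ℝ → ℝ := fun t => Real.exp (-cμ * |t|)
  set K := 2 / cμ * max 1 (2 / cμ)
  have hE₀ : 0 ≤ E := fun t => (Real.exp_pos _).le
  have hdecay_prod : ∀ y : ℝ × ℝ, |fμ y| ≤ Cμ * (E y.1 * E y.2) := fun y => by
    simpa only [E, ← Real.exp_add, mul_add] using hdecay y
  have hwindow : ∀ v > 0, ∫ x, windowIntegral E v x ^ 2 ≤ K * min v (v ^ 2) := fun v hv => by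
    simpa only [integral_exp_neg_mul_abs hcμ] using
      integral_sq_windowIntegral_le (integrable_exp_neg_mul_abs hcμ) hE₀
        (fun t => Real.exp_le_one_iff.2 (by nlinarith [abs_nonneg t])) hv
  refine ⟨Cμ ^ 2 * K ^ 2, by positivity, fun u hu => ?_⟩
  obtain ⟨hu₁ : 0 < u.1, hu₂ : 0 < u.2⟩ := hu
  calc ∫ x, μ (box x u) ^ 2
      ≤ Cμ ^ 2 * ((∫ x, windowIntegral E u.1 x ^ 2) * ∫ x, windowIntegral E u.2 x ^ 2) :=
        integral_sq_apply_box_le hdens (integrable_exp_neg_mul_abs hcμ) hE₀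
          (integrable_exp_neg_mul_abs hcμ) hE₀ hdecay_prod u
    _ ≤ Cμ ^ 2 * ((K * min u.1 (u.1 ^ 2)) * (K * min u.2 (u.2 ^ 2))) := by
        gcongr
        · exact hwindow _ hu₁
        · exact hwindow _ hu₂
    _ = Cμ ^ 2 * K ^ 2 * min u.1 (u.1 ^ 2) * min u.2 (u.2 ^ 2) := by ring

/-- Proposition 3.6: a signed measure with an exponentially decaying density satisfies
the `𝓜^{γ₁,γ₂}` bound with exponents `α₁ = α₂ = 2`. -/
theorem exp_decay_density_in_M_gamma
    (μ : MeasureTheory.SignedMeasure (ℝ × ℝ)) (fμ : ℝ × ℝ → ℝ) (hfμm : Measurable fμ)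
    (hdens : ∀ s : Set (ℝ × ℝ), MeasurableSet s → μ s = ∫ y in s, fμ y)
    (Cμ cμ : ℝ) (hCμ : 0 < Cμ) (hcμ : 0 < cμ)
    (hdecay : ∀ x : ℝ × ℝ, |fμ x| ≤ Cμ * Real.exp (-cμ * (|x.1| + |x.2|))) :
    ∃ C > (0 : ℝ), ∀ u ∈ posQuadrant,
      (∫ x : ℝ × ℝ, (μ (box x u)) ^ 2) ≤ C * min u.1 (u.1 ^ 2) * min u.2 (u.2 ^ 2) :=
  exp_decay_density_in_M_gamma_general μ fμ hdens Cμ cμ hCμ hcμ hdecay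
end

section
/- Let γ ∈ (1,2) and let f : ℝ² → ℝ be measurable with f ∈ L^γ(ℝ²). Define d_γ = ∫_0^∞ (exp(iu) − 1 − iu) u^{−γ−1} du ∈ ℂ (an absolutely convergent integral). Then ∫_{ℝ²} ∫_0^∞ Ψ(u f(x)) u^{−γ−1} du dx = d_γ ‖f₊‖_γ^γ + conj(d_γ) ‖f₋‖_γ^γ, where f₊ = max(f, 0), f₋ = −min(f, 0), ‖·‖_γ is the L^γ(ℝ²) norm, and conj denotes complex conjugation; moreover the double integral on the left-hand side is absolutely convergent. -/
open MeasureTheory Filter Set Topology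

/-- `Ψ(v) = exp(iv) - 1 - iv`. -/
noncomputable def Psi (v : ℝ) : ℂ := Complex.exp (v * Complex.I) - 1 - v * Complex.I

/-!
Substituting `v = u t` in the inner integral gives, for `t > 0`,
`∫_0^∞ Ψ(u t) u^{-γ-1} du = t^γ d_γ`, and `Ψ(-v) = conj Ψ(v)` turns the case `t < 0` into
`(-t)^γ conj(d_γ)`. Integrating over `x` with `t = f x` gives the identity. The same
substitution applied to `‖Ψ‖` shows `∫_0^∞ ‖Ψ(u f(x))‖ u^{-γ-1} du = |f x|^γ ∫_0^∞ ‖Ψ(v)‖ v^{-γ-1} dv`, which is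
integrable because `f ∈ L^γ`; `d_γ` itself converges since `‖Ψ(v)‖ ≤ v²` near `0` and
`‖Ψ(v)‖ ≤ 2 + |v|` at infinity.
-/

theorem continuous_Psi : Continuous Psi := by
  unfold Psi; fun_prop

@[simp]
theorem Psi_zero : Psi 0 = 0 := by
  simp [Psi]

theorem Psi_neg (v : ℝ) : Psi (-v) = (starRingEnd ℂ) (Psi v) := by
  simp only [Psi, map_sub, ← Complex.exp_conj, map_mul, Complex.conj_I, Complex.conj_ofReal,
    map_one, Complex.ofReal_neg]
  ring_nf

theorem norm_Psi_neg (v : ℝ) : ‖Psi (-v)‖ = ‖Psi v‖ := by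
  rw [Psi_neg, RCLike.norm_conj]

theorem norm_Psi_le_sq {v : ℝ} (hv : |v| ≤ 1) : ‖Psi v‖ ≤ v ^ 2 := by
  have h := Complex.norm_exp_sub_one_sub_id_le (x := v * Complex.I) (by simpa using hv)
  simpa [Psi, sq_abs] using h

theorem norm_Psi_le (v : ℝ) : ‖Psi v‖ ≤ 2 + |v| :=
  calc ‖Psi v‖ ≤ ‖Complex.exp (v * Complex.I)‖ + ‖(1 : ℂ)‖ + ‖(v : ℂ) * Complex.I‖ :=
        norm_sub_le_of_le (norm_sub_le _ _) le_rfl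
    _ = 2 + |v| := by
        rw [Complex.norm_exp_ofReal_mul_I, norm_mul, Complex.norm_real, Complex.norm_I]
        norm_num

theorem integrableOn_Psi_mul_rpow {γ : ℝ} (hγ : γ ∈ Ioo 1 2) :
    IntegrableOn (fun u : ℝ => Psi u * ((u ^ (-γ - 1) : ℝ) : ℂ)) (Ioi 0) := by
  have hmeas : AEStronglyMeasurable (fun u : ℝ => Psi u * ((u ^ (-γ - 1) : ℝ) : ℂ)) :=
    (continuous_Psi.measurable.mul (by fun_prop)).aestronglyMeasurable
  have hnorm : ∀ u : ℝ, 0 < u → ‖Psi u * ((u ^ (-γ - 1) : ℝ) : ℂ)‖ = ‖Psi u‖ * u ^ (-γ - 1) :=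
    fun u hu => by rw [norm_mul, Complex.norm_of_nonneg (Real.rpow_nonneg hu.le _)]
  have near_zero : IntegrableOn (fun u : ℝ => Psi u * ((u ^ (-γ - 1) : ℝ) : ℂ)) (Ioc 0 1) := by
    have hbound : IntegrableOn (fun u : ℝ => u ^ (1 - γ)) (Ioc 0 1) := by
      rw [← intervalIntegrable_iff_integrableOn_Ioc_of_le zero_le_one]
      exact intervalIntegral.intervalIntegrable_rpow' (by linarith [hγ.2])
    refine hbound.mono' hmeas.restrict ((ae_restrict_iff' measurableSet_Ioc).2 <|
      ae_of_all _ fun u ⟨hu0, hu1⟩ => ?_)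
    calc ‖Psi u * ((u ^ (-γ - 1) : ℝ) : ℂ)‖ = ‖Psi u‖ * u ^ (-γ - 1) := hnorm u hu0
      _ ≤ u ^ (2 : ℝ) * u ^ (-γ - 1) := by
          gcongr
          exact_mod_cast norm_Psi_le_sq (abs_le.2 ⟨by linarith, hu1⟩)
      _ = u ^ (1 - γ) := by rw [← Real.rpow_add hu0]; ring_nf
  have near_infinity : IntegrableOn (fun u : ℝ => Psi u * ((u ^ (-γ - 1) : ℝ) : ℂ)) (Ioi 1) := by
    have hbound : IntegrableOn (fun u : ℝ => 3 * u ^ (-γ)) (Ioi 1) :=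
      (integrableOn_Ioi_rpow_of_lt (by linarith [hγ.1]) one_pos).const_mul 3
    refine hbound.mono' hmeas.restrict ((ae_restrict_iff' measurableSet_Ioi).2 <|
      ae_of_all _ fun u (hu : 1 < u) => ?_)
    have hu0 : 0 < u := one_pos.trans hu
    calc ‖Psi u * ((u ^ (-γ - 1) : ℝ) : ℂ)‖ = ‖Psi u‖ * u ^ (-γ - 1) := hnorm u hu0
      _ ≤ (3 * u) * u ^ (-γ - 1) := by
          gcongr
          linarith [norm_Psi_le u, abs_of_pos hu0]
      _ = 3 * u ^ (-γ) := by
          rw [mul_assoc, ← Real.rpow_one_add' hu0.le (by linarith [hγ.1])]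
          ring_nf
  rw [← Ioc_union_Ioi_eq_Ioi zero_le_one]
  exact near_zero.union near_infinity

section Scaling

variable {E : Type*} [NormedAddCommGroup E] [NormedSpace ℝ E]

theorem rpow_smul_comp_mul_right_eqOn (g : ℝ → E) (s : ℝ) {t : ℝ} (ht : 0 < t) :
    EqOn (fun u : ℝ => u ^ s • g (u * t)) (fun u => t ^ (-s) • ((u * t) ^ s • g (u * t)))
      (Ioi 0) := by
  intro u (hu : 0 < u)
  simp only [smul_smul, Real.mul_rpow hu.le ht.le, Real.rpow_neg ht.le]
  rw [mul_left_comm, inv_mul_cancel₀ (Real.rpow_pos_of_pos ht s).ne', mul_one]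

theorem MeasureTheory.IntegrableOn.rpow_smul_comp_mul_right {g : ℝ → E} {s : ℝ}
    (hg : IntegrableOn (fun v : ℝ => v ^ s • g v) (Ioi 0)) {t : ℝ} (ht : 0 < t) :
    IntegrableOn (fun u : ℝ => u ^ s • g (u * t)) (Ioi 0) := by
  refine IntegrableOn.congr_fun ?_ (rpow_smul_comp_mul_right_eqOn g s ht).symm measurableSet_Ioi
  rw [← zero_mul t, ← integrableOn_Ioi_comp_mul_right_iff _ 0 ht] at hg
  exact hg.smul (t ^ (-s))

theorem integral_Ioi_rpow_smul_comp_mul_right (g : ℝ → E) (s : ℝ) {t : ℝ} (ht : 0 < t) :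
    ∫ u in Ioi 0, u ^ s • g (u * t) = t ^ (-s - 1) • ∫ v in Ioi 0, v ^ s • g v := by
  rw [setIntegral_congr_fun measurableSet_Ioi (rpow_smul_comp_mul_right_eqOn g s ht),
    integral_smul, integral_comp_mul_right_Ioi (fun v => v ^ s • g v) 0 ht, zero_mul, smul_smul,
    Real.rpow_sub ht, Real.rpow_one, div_eq_mul_inv]

end Scaling

theorem Psi_mul_neg_mul_ofReal (u t w : ℝ) :
    Psi (u * -t) * (w : ℂ) = (starRingEnd ℂ) (Psi (u * t) * w) := by
  rw [mul_neg, Psi_neg, map_mul, Complex.conj_ofReal]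

theorem integrableOn_Psi_comp_mul_rpow {γ : ℝ} (hγ : γ ∈ Ioo 1 2) (t : ℝ) :
    IntegrableOn (fun u : ℝ => Psi (u * t) * ((u ^ (-γ - 1) : ℝ) : ℂ)) (Ioi 0) := by
  have of_pos : ∀ {t : ℝ}, 0 < t →
      IntegrableOn (fun u : ℝ => Psi (u * t) * ((u ^ (-γ - 1) : ℝ) : ℂ)) (Ioi 0) := fun ht => by
    have h := integrableOn_Psi_mul_rpow hγ
    simp_rw [mul_comm (Psi _), ← Complex.real_smul] at h ⊢
    exact IntegrableOn.rpow_smul_comp_mul_right h ht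
  rcases lt_trichotomy t 0 with ht | rfl | ht
  · obtain ⟨s, hs, rfl⟩ : ∃ s, 0 < s ∧ t = -s := ⟨-t, neg_pos.2 ht, (neg_neg t).symm⟩
    simp_rw [Psi_mul_neg_mul_ofReal]
    exact (Complex.conjLIE.integrable_comp_iff).2 (of_pos hs)
  · simp
  · exact of_pos ht

theorem integral_Psi_comp_mul_rpow_of_pos (γ : ℝ) {t : ℝ} (ht : 0 < t) :
    ∫ u in Ioi 0, Psi (u * t) * ((u ^ (-γ - 1) : ℝ) : ℂ) =
      (∫ u in Ioi 0, Psi u * ((u ^ (-γ - 1) : ℝ) : ℂ)) * ((t ^ γ : ℝ) : ℂ) := by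
  simp_rw [mul_comm (Psi _), ← Complex.real_smul]
  rw [integral_Ioi_rpow_smul_comp_mul_right Psi _ ht, Complex.real_smul, mul_comm,
    show -(-γ - 1) - 1 = γ by ring]

theorem integral_Psi_comp_mul_rpow_of_neg (γ : ℝ) {t : ℝ} (ht : t < 0) :
    ∫ u in Ioi 0, Psi (u * t) * ((u ^ (-γ - 1) : ℝ) : ℂ) =
      (starRingEnd ℂ) (∫ u in Ioi 0, Psi u * ((u ^ (-γ - 1) : ℝ) : ℂ)) * (((-t) ^ γ : ℝ) : ℂ) := by
  obtain ⟨s, hs, rfl⟩ : ∃ s, 0 < s ∧ t = -s := ⟨-t, neg_pos.2 ht, (neg_neg t).symm⟩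
  simp_rw [Psi_mul_neg_mul_ofReal]
  rw [integral_conj, integral_Psi_comp_mul_rpow_of_pos γ hs, map_mul, Complex.conj_ofReal,
    neg_neg]

theorem integral_Psi_comp_mul_rpow {γ : ℝ} (hγ : 0 < γ) (t : ℝ) :
    ∫ u in Ioi 0, Psi (u * t) * ((u ^ (-γ - 1) : ℝ) : ℂ) =
      (∫ u in Ioi 0, Psi u * ((u ^ (-γ - 1) : ℝ) : ℂ)) * ((max t 0 ^ γ : ℝ) : ℂ) +
        (starRingEnd ℂ) (∫ u in Ioi 0, Psi u * ((u ^ (-γ - 1) : ℝ) : ℂ)) *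
          ((max (-t) 0 ^ γ : ℝ) : ℂ) := by
  rcases lt_trichotomy t 0 with ht | rfl | ht
  · rw [integral_Psi_comp_mul_rpow_of_neg γ ht, max_eq_right ht.le,
      max_eq_left (neg_nonneg.2 ht.le), Real.zero_rpow hγ.ne']
    simp
  · simp [Real.zero_rpow hγ.ne']
  · rw [integral_Psi_comp_mul_rpow_of_pos γ ht, max_eq_left ht.le,
      max_eq_right (neg_nonpos.2 ht.le), Real.zero_rpow hγ.ne']
    simp

theorem integral_norm_Psi_comp_mul_rpow {γ : ℝ} (hγ : 0 < γ) (t : ℝ) :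
    ∫ u in Ioi 0, ‖Psi (u * t) * ((u ^ (-γ - 1) : ℝ) : ℂ)‖ =
      |t| ^ γ * ∫ u in Ioi 0, u ^ (-γ - 1) • ‖Psi u‖ := by
  have heq : EqOn (fun u : ℝ => ‖Psi (u * t) * ((u ^ (-γ - 1) : ℝ) : ℂ)‖)
      (fun u => u ^ (-γ - 1) • ‖Psi (u * |t|)‖) (Ioi 0) := by
    intro u (hu : 0 < u)
    dsimp only
    rw [norm_mul, Complex.norm_of_nonneg (Real.rpow_nonneg hu.le _), smul_eq_mul, mul_comm]
    rcases abs_choice t with h | h <;> rw [h]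
    rw [mul_neg, norm_Psi_neg]
  rw [setIntegral_congr_fun measurableSet_Ioi heq]
  rcases (abs_nonneg t).eq_or_lt with h | h
  · simp [← h, Real.zero_rpow hγ.ne']
  · rw [integral_Ioi_rpow_smul_comp_mul_right (fun v => ‖Psi v‖) _ h, smul_eq_mul,
      show -(-γ - 1) - 1 = γ by ring]

theorem MeasureTheory.MemLp.integrable_abs_rpow {α : Type*} [MeasurableSpace α] {μ : Measure α}
    {f : α → ℝ} {p : ℝ} (hp : 0 < p) (hf : MemLp f (ENNReal.ofReal p) μ) :
    Integrable (fun x => |f x| ^ p) μ := by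
  simpa [ENNReal.toReal_ofReal hp.le] using
    hf.integrable_norm_rpow (by simpa using hp) ENNReal.ofReal_ne_top

theorem MeasureTheory.MemLp.integrable_max_zero_rpow {α : Type*} [MeasurableSpace α]
    {μ : Measure α} {f : α → ℝ} {p : ℝ} (hp : 0 < p) (hf : MemLp f (ENNReal.ofReal p) μ) :
    Integrable (fun x => max (f x) 0 ^ p) μ := by
  simpa only [abs_of_nonneg (le_max_right _ (0 : ℝ))] using hf.pos_part.integrable_abs_rpow hp

section Fubini

variable {α : Type*} [MeasurableSpace α] {μ : Measure α}

theorem integrable_prod_Psi_comp_mul_rpow {γ : ℝ} (hγ : γ ∈ Ioo 1 2) {f : α → ℝ}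
    (hf : MemLp f (ENNReal.ofReal γ) μ) :
    Integrable (fun p : α × ℝ => Psi (p.2 * f p.1) * ((p.2 ^ (-γ - 1) : ℝ) : ℂ))
      (μ.prod (volume.restrict (Ioi 0))) := by
  have hγ0 : 0 < γ := zero_lt_one.trans hγ.1
  have hmeas : AEStronglyMeasurable
      (fun p : α × ℝ => Psi (p.2 * f p.1) * ((p.2 ^ (-γ - 1) : ℝ) : ℂ))
      (μ.prod (volume.restrict (Ioi 0))) :=
    (continuous_Psi.comp_aestronglyMeasurable
      (measurable_snd.aestronglyMeasurable.mul hf.1.comp_fst)).mul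
      (by fun_prop : Measurable fun p : α × ℝ => ((p.2 ^ (-γ - 1) : ℝ) : ℂ)).aestronglyMeasurable
  rw [integrable_prod_iff hmeas]
  refine ⟨ae_of_all _ fun x => integrableOn_Psi_comp_mul_rpow hγ (f x), ?_⟩
  simp_rw [integral_norm_Psi_comp_mul_rpow hγ0]
  exact (hf.integrable_abs_rpow hγ0).mul_const _

theorem integral_integral_Psi_comp_mul_rpow {γ : ℝ} (hγ : 0 < γ) {f : α → ℝ}
    (hf : MemLp f (ENNReal.ofReal γ) μ) :
    ∫ x, (∫ u in Ioi 0, Psi (u * f x) * ((u ^ (-γ - 1) : ℝ) : ℂ)) ∂μ =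
      (∫ u in Ioi 0, Psi u * ((u ^ (-γ - 1) : ℝ) : ℂ)) * ((∫ x, max (f x) 0 ^ γ ∂μ : ℝ) : ℂ) +
        (starRingEnd ℂ) (∫ u in Ioi 0, Psi u * ((u ^ (-γ - 1) : ℝ) : ℂ)) *
          ((∫ x, max (-f x) 0 ^ γ ∂μ : ℝ) : ℂ) := by
  have hpos := hf.integrable_max_zero_rpow hγ
  have hneg := hf.neg.integrable_max_zero_rpow hγ
  simp_rw [integral_Psi_comp_mul_rpow hγ]
  rw [integral_add, integral_const_mul, integral_const_mul, integral_complex_ofReal,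
    integral_complex_ofReal]
  · exact hpos.ofReal.const_mul _
  · exact hneg.ofReal.const_mul _

end Fubini

theorem Psi_integral_stable_form_general
    (γ : ℝ) (hγ : γ ∈ Ioo (1 : ℝ) 2)
    (f : ℝ × ℝ → ℝ)
    (hfLp : MemLp f (ENNReal.ofReal γ) volume) :
    IntegrableOn (fun u : ℝ => Psi u * ((u ^ (-γ - 1) : ℝ) : ℂ)) (Ioi 0) ∧
    IntegrableOn
      (fun p : (ℝ × ℝ) × ℝ => Psi (p.2 * f p.1) * ((p.2 ^ (-γ - 1) : ℝ) : ℂ))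
      ((univ : Set (ℝ × ℝ)) ×ˢ Ioi (0 : ℝ)) ∧
    (∫ x : ℝ × ℝ, ∫ u in Ioi (0 : ℝ), Psi (u * f x) * ((u ^ (-γ - 1) : ℝ) : ℂ)) =
      (∫ u in Ioi (0 : ℝ), Psi u * ((u ^ (-γ - 1) : ℝ) : ℂ)) *
          ((∫ x : ℝ × ℝ, max (f x) 0 ^ γ : ℝ) : ℂ) +
        (starRingEnd ℂ) (∫ u in Ioi (0 : ℝ), Psi u * ((u ^ (-γ - 1) : ℝ) : ℂ)) *
          ((∫ x : ℝ × ℝ, max (-f x) 0 ^ γ : ℝ) : ℂ) := by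
  refine ⟨integrableOn_Psi_mul_rpow hγ, ?_,
    integral_integral_Psi_comp_mul_rpow (zero_lt_one.trans hγ.1) hfLp⟩
  rw [IntegrableOn, Measure.volume_eq_prod, ← Measure.prod_restrict, Measure.restrict_univ]
  exact integrable_prod_Psi_comp_mul_rpow hγ hfLp

/-- For `f ∈ L^γ(ℝ²)` with `γ ∈ (1,2)`,
`∫_{ℝ²} ∫_0^∞ Ψ(u f(x)) u^{-γ-1} du dx = d_γ ‖f₊‖_γ^γ + conj(d_γ) ‖f₋‖_γ^γ`,
where `d_γ = ∫_0^∞ Ψ(u) u^{-γ-1} du`; all integrals converge absolutely. -/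
theorem Psi_integral_stable_form
    (γ : ℝ) (hγ : γ ∈ Ioo (1 : ℝ) 2)
    (f : ℝ × ℝ → ℝ) (hfm : Measurable f)
    (hfLp : MemLp f (ENNReal.ofReal γ) volume) :
    IntegrableOn (fun u : ℝ => Psi u * ((u ^ (-γ - 1) : ℝ) : ℂ)) (Ioi 0) ∧
    IntegrableOn
      (fun p : (ℝ × ℝ) × ℝ => Psi (p.2 * f p.1) * ((p.2 ^ (-γ - 1) : ℝ) : ℂ))
      ((univ : Set (ℝ × ℝ)) ×ˢ Ioi (0 : ℝ)) ∧
    (∫ x : ℝ × ℝ, ∫ u in Ioi (0 : ℝ), Psi (u * f x) * ((u ^ (-γ - 1) : ℝ) : ℂ)) =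
      (∫ u in Ioi (0 : ℝ), Psi u * ((u ^ (-γ - 1) : ℝ) : ℂ)) *
          ((∫ x : ℝ × ℝ, max (f x) 0 ^ γ : ℝ) : ℂ) +
        (starRingEnd ℂ) (∫ u in Ioi (0 : ℝ), Psi u * ((u ^ (-γ - 1) : ℝ) : ℂ)) *
          ((∫ x : ℝ × ℝ, max (-f x) 0 ^ γ : ℝ) : ℂ) :=
  Psi_integral_stable_form_general γ hγ f hfLp
end
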